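/- arXiv:1412.2949 — 2 statements merged into one kernel-verified Lean document; each statement's English description precedes it below -/
import Mathlib

section
/- Let X be a compact metrizable abelian group with topology τ and metric δ, and v a sequence of characters. The family {W_n : n ∈ N}, where W_n is the τ-closure of the ρ_v-ball of radius 1/n around 0, satisfies W_{2n} + W_{2n} ⊆ W_n for all n, hence generates a metrizable group topology τ_v* with τ ⊆ τ_v* ⊆ τ_v. -/
/-! The ρ_v-balls `B_n` around `0` satisfy `B_{2n} + B_{2n} ⊆ B_n` because `ρ_v(·, 0)` is
subadditive (both `δ` and the metric of the circle are translation invariant and the `v_n` are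
additive); by continuity of addition this passes to the closures `W_n`. The `W_n` shrink to `0`
in `τ` since `δ ≤ ρ_v`, and each contains its own ρ_v-ball. -/

open Filter Topology

/-- `ρ_v(x,y) = sup{δ(x,y), sup_n d(v_n x, v_n y)}`. -/
noncomputable def rhoV {X : Type*} [MetricSpace X]
    (v : ℕ → X → AddCircle (1 : ℝ)) (x y : X) : ℝ :=
  max (dist x y) (⨆ n : ℕ, dist (v n x) (v n y))

/-- `W_n`: the `τ`-closure of the `ρ_v`-ball of radius `1/n` around `0`. -/
noncomputable def Wv {X : Type*} [MetricSpace X] [Zero X]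
    (v : ℕ → X → AddCircle (1 : ℝ)) (n : ℕ) : Set X :=
  closure {x : X | rhoV v x 0 < 1 / n}

open Metric Set

section InvariantMetric

variable {G : Type*} [AddZeroClass G] [PseudoMetricSpace G]

lemma dist_add_self_left_of_invariant (hinv : ∀ a x y : G, dist (a + x) (a + y) = dist x y)
    (x y : G) :
    dist (x + y) x = dist y 0 := by
  simpa using hinv x y 0

lemma dist_add_zero_le (hinv : ∀ a x y : G, dist (a + x) (a + y) = dist x y) (x y : G) :
    dist (x + y) 0 ≤ dist x 0 + dist y 0 :=
  calc dist (x + y) 0 ≤ dist (x + y) x + dist x 0 := dist_triangle _ _ _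
    _ = dist x 0 + dist y 0 := by rw [dist_add_self_left_of_invariant hinv, add_comm]

end InvariantMetric

lemma AddCircle.bddAbove_range_dist {ι : Type*} {p : ℝ} (hp : p ≠ 0)
    (f g : ι → AddCircle p) :
    BddAbove (range fun i => dist (f i) (g i)) :=
  ⟨|p| / 2, by
    rintro _ ⟨i, rfl⟩
    exact (dist_eq_norm (f i) (g i)).trans_le (norm_le_half_period p hp)⟩

section RhoV

variable {X : Type*} [MetricSpace X] (v : ℕ → X → AddCircle (1 : ℝ))

lemma dist_le_rhoV (x y : X) : dist x y ≤ rhoV v x y :=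
  le_max_left _ _

lemma dist_apply_le_rhoV (x y : X) (n : ℕ) : dist (v n x) (v n y) ≤ rhoV v x y :=
  (le_ciSup (AddCircle.bddAbove_range_dist one_ne_zero (v · x) (v · y)) n).trans
    (le_max_right _ _)

lemma rhoV_le {x y : X} {r : ℝ} (hdist : dist x y ≤ r)
    (happly : ∀ n, dist (v n x) (v n y) ≤ r) :
    rhoV v x y ≤ r :=
  max_le hdist (ciSup_le happly)

lemma rhoV_add_zero_le [AddGroup X] (hinv : ∀ a x y : X, dist (a + x) (a + y) = dist x y)
    (hadd : ∀ n, ∀ x y : X, v n (x + y) = v n x + v n y) (x y : X) :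
    rhoV v (x + y) 0 ≤ rhoV v x 0 + rhoV v y 0 := by
  have hv0 : ∀ n, v n 0 = 0 := fun n => (AddMonoidHom.mk' (v n) (hadd n)).map_zero
  refine rhoV_le v ((dist_add_zero_le hinv x y).trans
    (add_le_add (dist_le_rhoV v x 0) (dist_le_rhoV v y 0))) fun n => ?_
  rw [hadd, hv0]
  calc dist (v n x + v n y) 0 ≤ dist (v n x) 0 + dist (v n y) 0 :=
        dist_add_zero_le (fun _ _ _ => dist_add_left _ _ _) _ _
    _ ≤ rhoV v x 0 + rhoV v y 0 := by
        simpa only [hv0] using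
          add_le_add (dist_apply_le_rhoV v x 0 n) (dist_apply_le_rhoV v y 0 n)

lemma add_mem_Wv [AddGroup X] [ContinuousAdd X]
    (hinv : ∀ a x y : X, dist (a + x) (a + y) = dist x y)
    (hadd : ∀ n, ∀ x y : X, v n (x + y) = v n x + v n y) {n : ℕ} (hn : 0 < n) {x y : X}
    (hx : x ∈ Wv v (2 * n)) (hy : y ∈ Wv v (2 * n)) : x + y ∈ Wv v n :=
  map_mem_closure₂ continuous_add hx hy fun a ha b hb =>
    calc rhoV v (a + b) 0 ≤ rhoV v a 0 + rhoV v b 0 := rhoV_add_zero_le v hinv hadd a b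
      _ < 1 / ((2 * n : ℕ) : ℝ) + 1 / ((2 * n : ℕ) : ℝ) := add_lt_add ha hb
      _ = 1 / n := by
        have : (n : ℝ) ≠ 0 := Nat.cast_ne_zero.mpr hn.ne'
        push_cast
        field_simp
        ring

lemma Wv_subset_closedBall [Zero X] (n : ℕ) : Wv v n ⊆ closedBall 0 (1 / n) :=
  (closure_mono fun z hz => mem_ball.2 ((dist_le_rhoV v z 0).trans_lt hz)).trans
    closure_ball_subset_closedBall

lemma exists_add_image_Wv_subset [AddZeroClass X]
    (hinv : ∀ a x y : X, dist (a + x) (a + y) = dist x y) {s : Set X} (hs : IsOpen s) {x : X}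
    (hx : x ∈ s) : ∃ n : ℕ, 0 < n ∧ (fun y => x + y) '' Wv v n ⊆ s := by
  obtain ⟨ε, hε, hball⟩ := Metric.isOpen_iff.mp hs x hx
  obtain ⟨n, hn⟩ := exists_nat_one_div_lt hε
  refine ⟨n + 1, n.succ_pos, ?_⟩
  rintro _ ⟨y, hy, rfl⟩
  refine hball (mem_ball.2 ?_)
  rw [dist_add_self_left_of_invariant hinv]
  calc dist y 0 ≤ 1 / ((n + 1 : ℕ) : ℝ) := Wv_subset_closedBall v _ hy
    _ < ε := by push_cast; exact hn

end RhoV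

theorem test_topology_basic_general {X : Type*} [AddCommGroup X]
    [MetricSpace X] [IsTopologicalAddGroup X]
    (hinv : ∀ a x y : X, dist (a + x) (a + y) = dist x y)
    (v : ℕ → X → AddCircle (1 : ℝ))
    (hadd : ∀ n, ∀ x y : X, v n (x + y) = v n x + v n y) :
    -- `W_{2n} + W_{2n} ⊆ W_n`
    (∀ n : ℕ, 0 < n → ∀ x y : X,
        x ∈ Wv v (2 * n) → y ∈ Wv v (2 * n) → x + y ∈ Wv v n) ∧
    -- `τ ⊆ τ_v*`
    (∀ s : Set X, IsOpen s → ∀ x ∈ s,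
        ∃ n : ℕ, 0 < n ∧ (fun y => x + y) '' Wv v n ⊆ s) ∧
    -- `τ_v* ⊆ τ_v`
    (∀ n : ℕ, 0 < n → ∃ m : ℕ, 0 < m ∧
        {x : X | rhoV v x 0 < 1 / m} ⊆ Wv v n) :=
  ⟨fun _ hn _ _ hx hy => add_mem_Wv v hinv hadd hn hx hy,
    fun _ hs _ hx => exists_add_image_Wv_subset v hinv hs hx,
    fun n hn => ⟨n, hn, subset_closure⟩⟩

/-- The family `{W_n}` satisfies `W_{2n} + W_{2n} ⊆ W_n`, so it generates a
(metrizable) group topology `τ_v*` with `τ ⊆ τ_v* ⊆ τ_v`: every `τ`-open set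
is `τ_v*`-open, and every basic `τ_v*`-neighborhood of `0` contains a
`ρ_v`-ball. -/
theorem test_topology_basic {X : Type*} [AddCommGroup X]
    [MetricSpace X] [CompactSpace X] [IsTopologicalAddGroup X]
    (hinv : ∀ a x y : X, dist (a + x) (a + y) = dist x y)
    (v : ℕ → X → AddCircle (1 : ℝ))
    (hcont : ∀ n, Continuous (v n))
    (hadd : ∀ n, ∀ x y : X, v n (x + y) = v n x + v n y) :
    -- `W_{2n} + W_{2n} ⊆ W_n`
    (∀ n : ℕ, 0 < n → ∀ x y : X,
        x ∈ Wv v (2 * n) → y ∈ Wv v (2 * n) → x + y ∈ Wv v n) ∧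
    -- `τ ⊆ τ_v*`
    (∀ s : Set X, IsOpen s → ∀ x ∈ s,
        ∃ n : ℕ, 0 < n ∧ (fun y => x + y) '' Wv v n ⊆ s) ∧
    -- `τ_v* ⊆ τ_v`
    (∀ n : ℕ, 0 < n → ∃ m : ℕ, 0 < m ∧
        {x : X | rhoV v x 0 < 1 / m} ⊆ Wv v n) :=
  test_topology_basic_general hinv v hadd
end

section
/- Let u be an a-sequence. If the subgroup t_u(T) = {x : u_n x → 0} is open in the topology τ_u induced by the metric ρ_u(x,y) = sup{d(x,y), sup_n d(u_n x, u_n y)}, then the sequence of ratios q_n = u_n/u_{n-1} is bounded. -/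
/-!
Take a small `δ > 0` and the point `x = ∑ₙ ⌊δ qₙ⌋ / u (n + 1)` of the circle, written in the
mixed radix `(qₙ)`. Since `u (i + 1) ∣ u n` for `i < n`, the point `u n • x` is represented by the
tail `u n * ∑_{i ≥ n} ⌊δ qᵢ⌋ / u (i + 1)`, which lies in `[0, 2δ]` because `u` at least doubles at
each step. So `x` is in the `ρ_u`-ball of radius `ε` and `u n • x → 0`; but the tail is at least
`⌊δ qₙ⌋ / qₙ > δ - 1 / qₙ`, which forces `qₙ < 2 / δ` for large `n`.
-/

open Filter Topology

theorem dvd_of_le_of_dvd_succ {α : Type*} [Monoid α] {u : ℕ → α}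
    (hdvd : ∀ n, u n ∣ u (n + 1)) {m n : ℕ} (h : m ≤ n) : u m ∣ u n :=
  Nat.le_induction dvd_rfl (fun k _ ih => ih.trans (hdvd k)) n h

section StrictMonoDvdChain

variable {u : ℕ → ℕ}

theorem pos_of_strictMono_of_dvd_succ (hu : StrictMono u) (hdvd : ∀ n, u n ∣ u (n + 1))
    (n : ℕ) : 0 < u n := by
  have h0 : u 0 ≠ 0 := fun h =>
    (hu zero_lt_one).ne' ((Nat.eq_zero_of_zero_dvd (h ▸ hdvd 0)).trans h.symm)
  exact (Nat.pos_of_ne_zero h0).trans_le (hu.monotone n.zero_le)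

theorem two_mul_le_of_strictMono_of_dvd_succ (hu : StrictMono u)
    (hdvd : ∀ n, u n ∣ u (n + 1)) (n : ℕ) : 2 * u n ≤ u (n + 1) := by
  obtain ⟨c, hc⟩ := hdvd n
  have hlt : u n * 1 < u n * c := by rw [mul_one, ← hc]; exact hu n.lt_succ_self
  rw [hc, mul_comm]
  exact Nat.mul_le_mul_left _ (Nat.lt_of_mul_lt_mul_left hlt)

theorem two_pow_mul_le_of_two_mul_le_succ (hdouble : ∀ n, 2 * u n ≤ u (n + 1)) (n j : ℕ) :
    2 ^ j * u n ≤ u (j + n) := by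
  induction j with
  | zero => simp
  | succ j ih =>
    rw [pow_succ', mul_assoc, Nat.add_right_comm]
    exact (Nat.mul_le_mul_left 2 ih).trans (hdouble _)

theorem exists_forall_succ_le_mul_of_eventually (hdvd : ∀ n, u n ∣ u (n + 1)) {K : ℝ}
    (h : ∀ᶠ n in atTop, (u (n + 1) : ℝ) ≤ K * u n) : ∃ C : ℕ, ∀ n, u (n + 1) ≤ C * u n := by
  have hratio : ∀ᶠ n in atTop, u (n + 1) / u n ≤ ⌈K⌉₊ := by
    filter_upwards [h] with n hn
    refine Nat.div_le_of_le_mul (mul_comm (u n) _ ▸ ?_)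
    exact_mod_cast hn.trans (mul_le_mul_of_nonneg_right (Nat.le_ceil K) (Nat.cast_nonneg _))
  obtain ⟨C, hC⟩ := (isBoundedUnder_of_eventually_le hratio).bddAbove_range
  refine ⟨C, fun n => ?_⟩
  calc u (n + 1) = u (n + 1) / u n * u n := (Nat.div_mul_cancel (hdvd n)).symm
    _ ≤ C * u n := Nat.mul_le_mul_right _ (hC ⟨n, rfl⟩)

end StrictMonoDvdChain

theorem AddCircle.norm_coe_one_eq_self {y : ℝ} (h₀ : 0 ≤ y) (h₁ : y ≤ 1 / 2) :
    ‖(y : AddCircle (1 : ℝ))‖ = y := by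
  rw [(AddCircle.norm_coe_eq_abs_iff (p := (1 : ℝ)) one_ne_zero).2
    (by rwa [abs_one, abs_of_nonneg h₀]), abs_of_nonneg h₀]

theorem lt_two_div_of_floor_mul_div_lt_half {δ q : ℝ} (hδ : 0 < δ) (hq : 0 < q)
    (h : ⌊δ * q⌋₊ / q < δ / 2) : q < 2 / δ := by
  rw [div_lt_iff₀ hq] at h
  rw [lt_div_iff₀ hδ]
  nlinarith [Nat.lt_floor_add_one (δ * q)]

noncomputable def mixedRadixTail (u c : ℕ → ℕ) (n : ℕ) : ℝ :=
  ∑' j, (c (j + n) : ℝ) / u (j + n + 1)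

section MixedRadixTail

theorem mixedRadixTail_zero (u c : ℕ → ℕ) :
    mixedRadixTail u c 0 = ∑' i, (c i : ℝ) / u (i + 1) := by
  simp only [mixedRadixTail, add_zero]

variable {u c : ℕ → ℕ} {δ : ℝ}

theorem mul_digit_div_le (hpos : ∀ n, 0 < u n) (hdouble : ∀ n, 2 * u n ≤ u (n + 1))
    (hc : ∀ n, (c n : ℝ) ≤ δ * (u (n + 1) / u n)) (n j : ℕ) :
    (u n : ℝ) * (c (j + n) / u (j + n + 1)) ≤ δ * (1 / 2) ^ j := by
  have hpos' : ∀ k, (0 : ℝ) < u k := fun k => Nat.cast_pos.2 (hpos k)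
  have hδ : 0 ≤ δ := by
    have := (Nat.cast_nonneg _).trans (hc 0)
    exact nonneg_of_mul_nonneg_left this (div_pos (hpos' 1) (hpos' 0))
  have hdigit : (c (j + n) : ℝ) / u (j + n + 1) ≤ δ / u (j + n) := by
    rw [div_le_div_iff₀ (hpos' _) (hpos' _), ← le_div_iff₀ (hpos' _), mul_div_assoc]
    exact hc (j + n)
  have hgrowth : (u n : ℝ) / u (j + n) ≤ (1 / 2) ^ j := by
    rw [div_le_iff₀ (hpos' _), one_div_pow, div_mul_eq_mul_div, le_div_iff₀ (by positivity),
      one_mul, mul_comm]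
    exact_mod_cast two_pow_mul_le_of_two_mul_le_succ hdouble n j
  calc (u n : ℝ) * (c (j + n) / u (j + n + 1)) ≤ u n * (δ / u (j + n)) :=
        mul_le_mul_of_nonneg_left hdigit (Nat.cast_nonneg _)
    _ = δ * (u n / u (j + n)) := by ring
    _ ≤ δ * (1 / 2) ^ j := mul_le_mul_of_nonneg_left hgrowth hδ

theorem summable_digit_div (hpos : ∀ n, 0 < u n) (hdouble : ∀ n, 2 * u n ≤ u (n + 1))
    (hc : ∀ n, (c n : ℝ) ≤ δ * (u (n + 1) / u n)) (n : ℕ) :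
    Summable fun j => (c (j + n) : ℝ) / u (j + n + 1) := by
  refine (summable_nat_add_iff (f := fun i => (c i : ℝ) / u (i + 1)) n).2
    (Summable.of_nonneg_of_le (fun _ => by positivity) (fun j => ?_)
      (summable_geometric_two.mul_left δ))
  have hu0 : (1 : ℝ) ≤ u 0 := Nat.one_le_cast.2 (hpos 0)
  calc (c j : ℝ) / u (j + 1) ≤ u 0 * (c (j + 0) / u (j + 0 + 1)) :=
        le_mul_of_one_le_left (by positivity) hu0
    _ ≤ δ * (1 / 2) ^ j := mul_digit_div_le hpos hdouble hc 0 j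

theorem mul_mixedRadixTail_le (hpos : ∀ n, 0 < u n) (hdouble : ∀ n, 2 * u n ≤ u (n + 1))
    (hc : ∀ n, (c n : ℝ) ≤ δ * (u (n + 1) / u n)) (n : ℕ) :
    (u n : ℝ) * mixedRadixTail u c n ≤ 2 * δ := by
  rw [mixedRadixTail, ← tsum_mul_left]
  calc ∑' j, (u n : ℝ) * (c (j + n) / u (j + n + 1)) ≤ ∑' j : ℕ, δ * (1 / 2) ^ j :=
        Summable.tsum_le_tsum (mul_digit_div_le hpos hdouble hc n)
          ((summable_digit_div hpos hdouble hc n).mul_left _) (summable_geometric_two.mul_left δ)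
    _ = 2 * δ := by rw [tsum_mul_left, tsum_geometric_two, mul_comm]

theorem mixedRadixTail_nonneg (n : ℕ) : 0 ≤ mixedRadixTail u c n :=
  tsum_nonneg fun _ => by positivity

theorem digit_div_ratio_le_mul_mixedRadixTail (hpos : ∀ n, 0 < u n)
    (hdouble : ∀ n, 2 * u n ≤ u (n + 1)) (hc : ∀ n, (c n : ℝ) ≤ δ * (u (n + 1) / u n)) (n : ℕ) :
    (c n : ℝ) / (u (n + 1) / u n) ≤ u n * mixedRadixTail u c n := by
  have hfirst := (summable_digit_div hpos hdouble hc n).le_tsum 0 fun _ _ => by positivity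
  rw [zero_add] at hfirst
  rw [div_div_eq_mul_div, mul_comm, mul_div_assoc]
  exact mul_le_mul_of_nonneg_left hfirst (Nat.cast_nonneg _)

/-- Multiplication by `u n` turns the digits before position `n` into integers. -/
theorem zsmul_coe_mixedRadixTail_zero (hdvd : ∀ n, u n ∣ u (n + 1))
    (hs : Summable fun i => (c i : ℝ) / u (i + 1)) (n : ℕ) :
    (u n : ℤ) • (mixedRadixTail u c 0 : AddCircle (1 : ℝ)) =
      ((u n * mixedRadixTail u c n : ℝ) : AddCircle (1 : ℝ)) := by
  have hsplit := (hs.sum_add_tsum_nat_add n).symm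
  have hhead : ∀ i ∈ Finset.range n,
      (u n : ℝ) * (c i / u (i + 1)) = (c i * (u n / u (i + 1)) : ℕ) := by
    intro i hi
    obtain ⟨d, hd⟩ := dvd_of_le_of_dvd_succ hdvd (Finset.mem_range.1 hi)
    rcases eq_or_ne (u (i + 1)) 0 with h | h
    · simp [hd, h]
    · rw [hd, Nat.mul_div_cancel_left _ (Nat.pos_of_ne_zero h)]
      push_cast
      field_simp
  rw [← AddCircle.coe_zsmul, zsmul_eq_mul, Int.cast_natCast, mixedRadixTail_zero, mixedRadixTail,
    hsplit, mul_add, Finset.mul_sum, Finset.sum_congr rfl hhead, ← Nat.cast_sum, AddCircle.coe_add,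
    ← nsmul_one, AddCircle.coe_nsmul, AddCircle.coe_period, smul_zero, zero_add]

theorem norm_zsmul_coe_mixedRadixTail_zero (hdvd : ∀ n, u n ∣ u (n + 1))
    (hpos : ∀ n, 0 < u n) (hdouble : ∀ n, 2 * u n ≤ u (n + 1))
    (hc : ∀ n, (c n : ℝ) ≤ δ * (u (n + 1) / u n)) (hδ : 2 * δ ≤ 1 / 2) (n : ℕ) :
    ‖(u n : ℤ) • (mixedRadixTail u c 0 : AddCircle (1 : ℝ))‖ = u n * mixedRadixTail u c n := by
  rw [zsmul_coe_mixedRadixTail_zero hdvd (by simpa using summable_digit_div hpos hdouble hc 0),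
    AddCircle.norm_coe_one_eq_self (mul_nonneg (Nat.cast_nonneg _) (mixedRadixTail_nonneg n))
      ((mul_mixedRadixTail_le hpos hdouble hc n).trans hδ)]

theorem max_norm_coe_mixedRadixTail_zero_le (hdvd : ∀ n, u n ∣ u (n + 1))
    (hpos : ∀ n, 0 < u n) (hdouble : ∀ n, 2 * u n ≤ u (n + 1))
    (hc : ∀ n, (c n : ℝ) ≤ δ * (u (n + 1) / u n)) (hδ : 2 * δ ≤ 1 / 2) :
    max ‖(mixedRadixTail u c 0 : AddCircle (1 : ℝ))‖
      (⨆ n : ℕ, ‖(u n : ℤ) • (mixedRadixTail u c 0 : AddCircle (1 : ℝ))‖) ≤ 2 * δ := by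
  have hx : mixedRadixTail u c 0 ≤ 2 * δ :=
    (le_mul_of_one_le_left (mixedRadixTail_nonneg 0) (Nat.one_le_cast.2 (hpos 0))).trans
      (mul_mixedRadixTail_le hpos hdouble hc 0)
  rw [AddCircle.norm_coe_one_eq_self (mixedRadixTail_nonneg 0) (hx.trans hδ)]
  exact max_le hx (ciSup_le fun n =>
    (norm_zsmul_coe_mixedRadixTail_zero hdvd hpos hdouble hc hδ n).trans_le
      (mul_mixedRadixTail_le hpos hdouble hc n))

end MixedRadixTail

theorem ratios_bounded_of_tu_rho_open_general (u : ℕ → ℕ) (hu : StrictMono u)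
    (hdvd : ∀ n, u n ∣ u (n + 1))
    (hopen : ∃ ε : ℝ, 0 < ε ∧
      {x : AddCircle (1 : ℝ) | max ‖x‖ (⨆ n : ℕ, ‖(u n : ℤ) • x‖) < ε} ⊆
        {x : AddCircle (1 : ℝ) |
          Tendsto (fun n => (u n : ℤ) • x) atTop (𝓝 0)}) :
    ∃ C : ℕ, ∀ n, u (n + 1) ≤ C * u n := by
  obtain ⟨ε, hε, hball⟩ := hopen
  have hpos := pos_of_strictMono_of_dvd_succ hu hdvd
  have hdouble := two_mul_le_of_strictMono_of_dvd_succ hu hdvd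
  obtain ⟨δ, hδ, hδε, hδhalf⟩ : ∃ δ : ℝ, 0 < δ ∧ 2 * δ < ε ∧ 2 * δ ≤ 1 / 2 :=
    ⟨min ε (1 / 2) / 4, by positivity, by linarith [min_le_left ε (1 / 2)],
      by linarith [min_le_right ε (1 / 2)]⟩
  set c : ℕ → ℕ := fun n => ⌊δ * (u (n + 1) / u n)⌋₊
  have hc : ∀ n, (c n : ℝ) ≤ δ * (u (n + 1) / u n) := fun n => Nat.floor_le (by positivity)
  have hlim : Tendsto (fun n => (u n : ℝ) * mixedRadixTail u c n) atTop (𝓝 0) := by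
    have hmem := (max_norm_coe_mixedRadixTail_zero_le hdvd hpos hdouble hc hδhalf).trans_lt hδε
    simpa only [norm_zsmul_coe_mixedRadixTail_zero hdvd hpos hdouble hc hδhalf, norm_zero]
      using (hball hmem).norm
  refine exists_forall_succ_le_mul_of_eventually hdvd (K := 2 / δ) ?_
  filter_upwards [hlim.eventually_lt_const (half_pos hδ)] with n hn
  have hq : (0 : ℝ) < u (n + 1) / u n := div_pos (Nat.cast_pos.2 (hpos _)) (Nat.cast_pos.2 (hpos _))
  rw [← div_le_iff₀ (by exact_mod_cast hpos n)]
  exact (lt_two_div_of_floor_mul_div_lt_half hδ hq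
    ((digit_div_ratio_le_mul_mixedRadixTail hpos hdouble hc n).trans_lt hn)).le

/-- Proposition: for an a-sequence `u`, if the subgroup
`t_u(𝕋) = {x : u_n x → 0}` is open in the topology induced by
`ρ_u(x,y) = sup{d(x,y), sup_n d(u_n x, u_n y)}` — equivalently, being a
subgroup, if it contains a `ρ_u`-ball around `0` — then the sequence of ratios
`q_n = u_{n+1}/u_n` is bounded. -/
theorem ratios_bounded_of_tu_rho_open (u : ℕ → ℕ) (hu : StrictMono u)
    (hpos : 1 ≤ u 0) (hdvd : ∀ n, u n ∣ u (n + 1))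
    (hopen : ∃ ε : ℝ, 0 < ε ∧
      {x : AddCircle (1 : ℝ) | max ‖x‖ (⨆ n : ℕ, ‖(u n : ℤ) • x‖) < ε} ⊆
        {x : AddCircle (1 : ℝ) |
          Tendsto (fun n => (u n : ℤ) • x) atTop (𝓝 0)}) :
    ∃ C : ℕ, ∀ n, u (n + 1) ≤ C * u n :=
  ratios_bounded_of_tu_rho_open_general u hu hdvd hopen
end
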